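/- With X a nontrivial minimal subshift of Σ₂ and X̃ ⊆ Σ₃ its extension as above, for every nonempty open set U ⊆ X̃ there exist a nonempty compact set K ⊆ U and an integer m ≥ 1 with σ^m(K) = K. Consequently the induced map σ̄ on the hyperspace K(X̃) has a dense set of periodic points. -/

import Mathlib

open TopologicalSpace

/-- The induced map on the hyperspace of nonempty compact subsets. -/
def barMap {X : Type*} [TopologicalSpace X] (f : X → X) (hf : Continuous f) :
    NonemptyCompacts X → NonemptyCompacts X :=
  fun A => ⟨⟨f '' A, A.isCompact.image hf⟩, A.nonempty.image f⟩

/-- Topological transitivity. -/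
def IsTransitive {X : Type*} [TopologicalSpace X] (f : X → X) : Prop :=
  ∀ U V : Set X, IsOpen U → IsOpen V → U.Nonempty → V.Nonempty →
    ∃ n : ℕ, (f^[n] '' U ∩ V).Nonempty

/-- Topological mixing. -/
def IsMixing {X : Type*} [TopologicalSpace X] (f : X → X) : Prop :=
  ∀ U V : Set X, IsOpen U → IsOpen V → U.Nonempty → V.Nonempty →
    ∃ N : ℕ, ∀ n ≥ N, (f^[n] '' U ∩ V).Nonempty

/-- Weak mixing: `f × f` is transitive. -/
def IsWeaklyMixing {X : Type*} [TopologicalSpace X] (f : X → X) : Prop :=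
  IsTransitive (fun p : X × X => (f p.1, f p.2))

/-- The set of periodic points. -/
def Periodics {X : Type*} (f : X → X) : Set X := {x | ∃ n ≥ 1, f^[n] x = x}

/-- The shift map on the full shift over k symbols. -/
def shiftMap {k : ℕ} : (ℕ → Fin k) → (ℕ → Fin k) := fun x n => x (n + 1)

/-- A finite word is admissible in Y if it occurs in some element of Y. -/
def AdmissibleIn {k : ℕ} (Y : Set (ℕ → Fin k)) (u : List (Fin k)) : Prop :=
  ∃ y ∈ Y, ∃ i : ℕ, ∀ l : ℕ, ∀ h : l < u.length, y (i + l) = u.get ⟨l, h⟩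

/-- A nonempty closed invariant set with no proper nonempty closed invariant subset. -/
def IsMinimalSet {X : Type*} [TopologicalSpace X] (f : X → X) (A : Set X) : Prop :=
  A.Nonempty ∧ IsClosed A ∧ Set.MapsTo f A A ∧
    ∀ B ⊆ A, B.Nonempty → IsClosed B → Set.MapsTo f B B → B = A

/-- Topological mixing of the subsystem on an invariant subset Y, phrased with
relatively open sets. -/
def SubMixing {X : Type*} [TopologicalSpace X] (f : X → X) (Y : Set X) : Prop :=
  ∀ U V : Set X, IsOpen U → IsOpen V → (U ∩ Y).Nonempty → (V ∩ Y).Nonempty →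
    ∃ N : ℕ, ∀ n ≥ N, ∃ y ∈ U ∩ Y, f^[n] y ∈ V

/-- The embedding of the 2-symbol alphabet into the 3-symbol alphabet. -/
def emb23 : Fin 2 → Fin 3 := fun b => ⟨b.val, by omega⟩

/-- The extension of b in Σ₃: sequences obtained from b by inserting the symbol 2
at the remaining positions, keeping the symbols of b in order along an infinite
increasing sequence of positions. -/
def Xb (b : ℕ → Fin 2) : Set (ℕ → Fin 3) :=
  {x | ∃ n : ℕ → ℕ, StrictMono n ∧ (∀ i, x (n i) = emb23 (b i)) ∧
        ∀ m, (∀ i, n i ≠ m) → x m = (2 : Fin 3)}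

/-- The extension of the subshift X ⊆ Σ₂ inside Σ₃. -/
def Xtilde (X : Set (ℕ → Fin 2)) : Set (ℕ → Fin 3) :=
  closure (⋃ b ∈ X, Xb b)


instance : UniformSpace (Fin 3) := ⊥

noncomputable instance : MetricSpace (ℕ → Fin 3) :=
  PiNat.metricSpaceOfDiscreteUniformity (fun _ => rfl)

/-!
A point `z` of some `Xb b` inside `U` may be cut at a window of length `W` with
`cylinder z W ⊆ U`; the window spells a prefix `u` of `b` padded with `2`s. Since `X` is minimal,
`u` recurs in every point of `X` with gaps bounded by some `L`, so with `m = W + L + 1` one can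
keep writing blocks "window, return word of `b`, padding" of length `m`: for every `C` some
point of `X̃` has the window at the start of its first `C` blocks, and by compactness some
point has it in all blocks. These points form a compact set mapped into itself by `σ^m`, and
the intersection of its forward images is a nonempty compact `K ⊆ U` with `σ^m K = K`.

For the hyperspace, a nonempty compact `A` is approximated in the Hausdorff metric by the union
of such sets chosen in finitely many small balls covering `A`; that union is fixed by `σ̄^M`
for `M` the product of their periods.
-/

open Set Function

lemma Set.iterate_image_eq_of_dvd {α : Type*} {f : α → α} {K : Set α} {m n : ℕ}
    (hK : f^[m] '' K = K) (hmn : m ∣ n) : f^[n] '' K = K := by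
  obtain ⟨c, rfl⟩ := hmn
  induction c with
  | zero => simp
  | succ c ih => rw [Nat.mul_succ, iterate_add, image_comp, hK, ih]

section Dynamics

variable {α : Type*} [TopologicalSpace α] {f : α → α}

lemma IsMinimalSet.exists_iterate_mem (hf : Continuous f) {X : Set α}
    (hX : IsMinimalSet f X) {x : α} (hx : x ∈ X) {V : Set α} (hV : IsOpen V)
    (hVX : (V ∩ X).Nonempty) : ∃ t, f^[t] x ∈ V := by
  obtain ⟨-, hXc, hXf, hXmin⟩ := hX
  have horbit : MapsTo f (range fun t => f^[t] x) (range fun t => f^[t] x) := by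
    rintro - ⟨t, rfl⟩
    exact ⟨t + 1, iterate_succ_apply' f t x⟩
  have hclosure : closure (range fun t => f^[t] x) = X :=
    hXmin _ (closure_minimal (range_subset_iff.2 fun t => hXf.iterate t hx) hXc)
      ⟨x, subset_closure ⟨0, rfl⟩⟩ isClosed_closure (horbit.closure hf)
  obtain ⟨y, hyV, hyX⟩ := hVX
  obtain ⟨-, htV, t, rfl⟩ := mem_closure_iff.1 (hclosure ▸ hyX) V hV hyV
  exact ⟨t, htV⟩

lemma IsMinimalSet.exists_bounded_return [CompactSpace α] (hf : Continuous f) {X : Set α}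
    (hX : IsMinimalSet f X) {V : Set α} (hV : IsOpen V) (hVX : (V ∩ X).Nonempty) :
    ∃ L, ∀ x ∈ X, ∃ t ≤ L, f^[t] x ∈ V := by
  obtain ⟨L, hL⟩ := hX.2.1.isCompact.elim_directed_cover (fun L => ⋃ t ≤ L, f^[t] ⁻¹' V)
    (fun L => isOpen_biUnion fun t _ => hV.preimage (hf.iterate t))
    (fun x hx => by
      obtain ⟨t, ht⟩ := hX.exists_iterate_mem hf hx hV hVX
      exact mem_iUnion.2 ⟨t, mem_iUnion₂.2 ⟨t, le_rfl, ht⟩⟩)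
    (Monotone.directed_le fun L L' hLL' => biUnion_mono (fun t ht => le_trans ht hLL')
      fun _ _ => subset_rfl)
  exact ⟨L, fun x hx => by simpa using hL hx⟩

lemma nonempty_inter_iInter_preimage_iterate [CompactSpace α] (hf : Continuous f)
    {F G : Set α} (hF : IsClosed F) (hG : IsClosed G)
    (h : ∀ C, ∃ x ∈ F, ∀ c < C, f^[c] x ∈ G) : (F ∩ ⋂ c, f^[c] ⁻¹' G).Nonempty := by
  let S : ℕ → Set α := fun C => F ∩ ⋂ c : Fin C, f^[c] ⁻¹' G
  have hS : ∀ C, IsClosed (S C) := fun C =>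
    hF.inter (isClosed_iInter fun c => hG.preimage (hf.iterate c))
  obtain ⟨x, hx⟩ := IsCompact.nonempty_iInter_of_sequence_nonempty_isCompact_isClosed S
    (fun C x hx => ⟨hx.1, mem_iInter.2 fun c => mem_iInter.1 hx.2 c.castSucc⟩)
    (fun C => by
      obtain ⟨x, hxF, hxG⟩ := h C
      exact ⟨x, hxF, mem_iInter.2 fun c => hxG c c.isLt⟩)
    (hS 0).isCompact hS
  have hxS : ∀ C, x ∈ S C := mem_iInter.1 hx
  exact ⟨x, (hxS 0).1, mem_iInter.2 fun c => mem_iInter.1 (hxS (c + 1)).2 (Fin.last c)⟩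

lemma IsCompact.exists_subset_image_eq [T2Space α] (hf : Continuous f) {Y : Set α}
    (hY : IsCompact Y) (hne : Y.Nonempty) (hfY : MapsTo f Y Y) :
    ∃ K ⊆ Y, K.Nonempty ∧ IsCompact K ∧ f '' K = K := by
  let S : ℕ → Set α := fun n => f^[n] '' Y
  have hS_succ : ∀ n, f '' S n = S (n + 1) := fun n => by
    simp only [S, iterate_succ', image_comp]
  have hS_anti : ∀ n, S (n + 1) ⊆ S n := fun n => by
    simp only [S, iterate_succ, image_comp]
    exact image_mono hfY.image_subset
  have hS_compact : ∀ n, IsCompact (S n) := fun n => hY.image (hf.iterate n)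
  have hS_closed : ∀ n, IsClosed (S n) := fun n => (hS_compact n).isClosed
  have hK_closed : IsClosed (⋂ n, S n) := isClosed_iInter hS_closed
  refine ⟨⋂ n, S n, fun x hx => by simpa [S] using mem_iInter.1 hx 0,
    IsCompact.nonempty_iInter_of_sequence_nonempty_isCompact_isClosed S hS_anti
      (fun n => hne.image _) (hS_compact 0) hS_closed,
    (hS_compact 0).of_isClosed_subset hK_closed (iInter_subset S 0), ?_⟩
  refine (image_iInter_subset S f).trans ?_ |>.antisymm fun y hy => ?_
  · exact subset_iInter fun n =>
      (iInter_subset _ n).trans ((hS_succ n).trans_subset (hS_anti n))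
  -- `y` has a preimage in every `S n`, hence, by compactness, one in their intersection
  let D : ℕ → Set α := fun n => S n ∩ f ⁻¹' {y}
  have hD_closed : ∀ n, IsClosed (D n) := fun n =>
    (hS_closed n).inter (isClosed_singleton.preimage hf)
  obtain ⟨x, hx⟩ := IsCompact.nonempty_iInter_of_sequence_nonempty_isCompact_isClosed D
    (fun n => inter_subset_inter_left _ (hS_anti n))
    (fun n => by
      obtain ⟨x, hx, hxy⟩ := (hS_succ n).symm ▸ mem_iInter.1 hy (n + 1)
      exact ⟨x, hx, hxy⟩)
    ((hS_compact 0).of_isClosed_subset (hD_closed 0) inter_subset_left) hD_closed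
  exact ⟨x, mem_iInter.2 fun n => (mem_iInter.1 hx n).1, (mem_iInter.1 hx 0).2⟩

end Dynamics

section Hyperspace

lemma barMap_iterate_coe {α : Type*} [TopologicalSpace α] {f : α → α} (hf : Continuous f)
    (n : ℕ) (A : NonemptyCompacts α) : ((barMap f hf)^[n] A : Set α) = f^[n] '' A := by
  induction n with
  | zero => simp
  | succ n ih =>
    rw [iterate_succ_apply', iterate_succ', image_comp, ← ih]
    rfl

lemma Subtype.exists_compact_iterate_image_eq {α : Type*} [TopologicalSpace α] {S : Set α}
    {f : α → α} {g : S → S} (hgf : ∀ x, (g x : α) = f x)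
    (h : ∀ U : Set α, IsOpen U → (U ∩ S).Nonempty → ∃ K : Set α, K.Nonempty ∧ IsCompact K ∧
      K ⊆ U ∩ S ∧ ∃ m, 1 ≤ m ∧ f^[m] '' K = K)
    {U : Set S} (hU : IsOpen U) (hne : U.Nonempty) :
    ∃ K ⊆ U, K.Nonempty ∧ IsCompact K ∧ ∃ m, 1 ≤ m ∧ g^[m] '' K = K := by
  obtain ⟨V, hV, rfl⟩ := isOpen_induced_iff.1 hU
  obtain ⟨x, hx⟩ := hne
  obtain ⟨K, ⟨y, hy⟩, hK, hKVS, m, hm, hKm⟩ := h V hV ⟨x, hx, x.2⟩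
  have hval : Subtype.val '' (Subtype.val ⁻¹' K : Set S) = K := by
    rw [Subtype.image_preimage_coe, inter_eq_right.2 fun x hx => (hKVS hx).2]
  refine ⟨Subtype.val ⁻¹' K, fun x hx => (hKVS hx).1, ⟨⟨y, (hKVS hy).2⟩, hy⟩,
    Topology.IsEmbedding.subtypeVal.isCompact_iff.2 (hval.symm ▸ hK), m, hm, ?_⟩
  apply Subtype.val_injective.image_injective
  have hsemiconj : Semiconj Subtype.val g f := hgf
  rw [← image_comp, (hsemiconj.iterate_right m).comp_eq, image_comp, hval, hKm]

theorem dense_periodics_barMap {Y : Type*} [MetricSpace Y] {f : Y → Y} (hf : Continuous f)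
    (h : ∀ U : Set Y, IsOpen U → U.Nonempty →
      ∃ K ⊆ U, K.Nonempty ∧ IsCompact K ∧ ∃ m, 1 ≤ m ∧ f^[m] '' K = K) :
    Dense (Periodics (barMap f hf)) := by
  rw [Metric.dense_iff]
  intro A r hr
  choose K hKU hKne hKc m hm hKm using fun a : Y =>
    h (Metric.ball a (r / 4)) Metric.isOpen_ball ⟨a, Metric.mem_ball_self (by positivity)⟩
  obtain ⟨t, htA, hAt⟩ := A.isCompact.elim_nhds_subcover (fun a => Metric.ball a (r / 4))
    fun a _ => Metric.ball_mem_nhds a (by positivity)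
  obtain ⟨a₀, ha₀⟩ := A.nonempty
  obtain ⟨a₁, ha₁t, -⟩ := mem_iUnion₂.1 (hAt ha₀)
  let B : NonemptyCompacts Y :=
    ⟨⟨⋃ a ∈ t, K a, t.isCompact_biUnion fun a _ => hKc a⟩,
      (hKne a₁).mono (subset_biUnion_of_mem (u := K) ha₁t)⟩
  refine ⟨B, ?_, ∏ a ∈ t, m a, Finset.one_le_prod' fun a _ => hm a, NonemptyCompacts.ext ?_⟩
  · have hdist : Metric.hausdorffDist (B : Set Y) A ≤ r / 2 := by
      refine Metric.hausdorffDist_le_of_mem_dist (by positivity) (fun x hx => ?_) fun x hx => ?_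
      · obtain ⟨a, ha, hxa⟩ := mem_iUnion₂.1 hx
        exact ⟨a, htA a ha, by linarith [Metric.mem_ball.1 (hKU a hxa)]⟩
      · obtain ⟨a, ha, hxa⟩ := mem_iUnion₂.1 (hAt hx)
        obtain ⟨y, hy⟩ := hKne a
        refine ⟨y, mem_iUnion₂.2 ⟨a, ha, hy⟩, ?_⟩
        linarith [dist_triangle_right x y a, Metric.mem_ball.1 hxa, Metric.mem_ball.1 (hKU a hy)]
    rw [Metric.mem_ball, Metric.NonemptyCompacts.dist_eq]
    linarith
  · rw [barMap_iterate_coe]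
    simp only [B, NonemptyCompacts.coe_mk, Compacts.coe_mk, image_iUnion₂]
    exact iUnion₂_congr fun a ha => iterate_image_eq_of_dvd (hKm a) (Finset.dvd_prod_of_mem m ha)

end Hyperspace

section Extension

open PiNat

lemma continuous_shiftMap {k : ℕ} : Continuous (shiftMap (k := k)) :=
  continuous_pi fun n => continuous_apply (n + 1)

lemma shiftMap_iterate_eq_drop {k : ℕ} (n : ℕ) (x : ℕ → Fin k) :
    shiftMap^[n] x = Stream'.drop n x := by
  induction n generalizing x with
  | zero => rfl
  | succ n ih => rw [iterate_succ_apply, ih]; rfl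

lemma mem_cylinder_iff_take_eq {α : Type*} {x y : ℕ → α} {n : ℕ} :
    y ∈ cylinder x n ↔ Stream'.take n y = Stream'.take n x := by
  simp [mem_cylinder_iff, List.ext_getElem_iff, Stream'.length_take _ y,
    Stream'.length_take _ x, Stream'.take_get (a := y), Stream'.take_get (a := x), Stream'.get]

def unembed23 (a : Fin 3) : Option (Fin 2) :=
  if h : (a : ℕ) < 2 then some ⟨a, h⟩ else none

def eraseTwos (w : List (Fin 3)) : List (Fin 2) := w.filterMap unembed23

@[simp] lemma eraseTwos_nil : eraseTwos [] = [] := rfl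

@[simp] lemma eraseTwos_cons_two (w : List (Fin 3)) : eraseTwos (2 :: w) = eraseTwos w := rfl

@[simp] lemma eraseTwos_cons_emb23 (a : Fin 2) (w : List (Fin 3)) :
    eraseTwos (emb23 a :: w) = a :: eraseTwos w := by
  simp [eraseTwos, unembed23, emb23, Nat.le_of_lt_succ a.isLt]

@[simp] lemma eraseTwos_append (v w : List (Fin 3)) :
    eraseTwos (v ++ w) = eraseTwos v ++ eraseTwos w := List.filterMap_append

@[simp] lemma eraseTwos_map_emb23 (w : List (Fin 2)) : eraseTwos (w.map emb23) = w := by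
  induction w <;> simp_all

@[simp] lemma eraseTwos_replicate_two (k : ℕ) : eraseTwos (List.replicate k 2) = [] := by
  induction k <;> simp_all [List.replicate_succ]

lemma map_emb23_mem_Xb (b : ℕ → Fin 2) : Stream'.map emb23 b ∈ Xb b :=
  ⟨id, strictMono_id, fun _ => rfl, fun q hq => absurd rfl (hq q)⟩

lemma cons_two_mem_Xb {b : ℕ → Fin 2} {y : ℕ → Fin 3} (hy : y ∈ Xb b) :
    Stream'.cons 2 y ∈ Xb b := by
  obtain ⟨n, hn, hval, hoff⟩ := hy
  refine ⟨fun i => n i + 1, fun i i' h => Nat.succ_lt_succ (hn h), hval, ?_⟩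
  rintro (_ | q) hq
  · rfl
  · exact hoff q fun i h => hq i (congrArg (· + 1) h)

lemma cons_emb23_mem_Xb {b : ℕ → Fin 2} {y : ℕ → Fin 3} (a : Fin 2) (hy : y ∈ Xb b) :
    Stream'.cons (emb23 a) y ∈ Xb (Stream'.cons a b) := by
  obtain ⟨n, hn, hval, hoff⟩ := hy
  refine ⟨Stream'.cons 0 fun i => n i + 1, strictMono_nat_of_lt_succ ?_, ?_, ?_⟩
  · rintro (_ | i)
    · exact Nat.succ_pos _
    · exact Nat.succ_lt_succ (hn i.lt_succ_self)
  · rintro (_ | i)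
    · rfl
    · exact hval i
  · rintro (_ | q) hq
    · exact absurd rfl (hq 0)
    · exact hoff q fun i h => hq (i + 1) (congrArg (· + 1) h)

lemma append_mem_Xb {b : ℕ → Fin 2} {y : ℕ → Fin 3} (w : List (Fin 3)) (hy : y ∈ Xb b) :
    w ++ₛ y ∈ Xb (eraseTwos w ++ₛ b) := by
  induction w with
  | nil => exact hy
  | cons a w ih =>
    fin_cases a
    · exact cons_emb23_mem_Xb 0 ih
    · exact cons_emb23_mem_Xb 1 ih
    · exact cons_two_mem_Xb ih

lemma Xb_shiftMap {b : ℕ → Fin 2} {x : ℕ → Fin 3} (hx : x ∈ Xb b) :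
    x 0 = 2 ∧ shiftMap x ∈ Xb b ∨ x 0 = emb23 (b 0) ∧ shiftMap x ∈ Xb (shiftMap b) := by
  obtain ⟨n, hn, hval, hoff⟩ := hx
  rcases Nat.eq_zero_or_pos (n 0) with h0 | h0
  · have hpos : ∀ i, 0 < n (i + 1) := fun i => h0 ▸ hn i.succ_pos
    refine .inr ⟨by simpa [h0] using hval 0, fun i => n (i + 1) - 1, fun i i' h => ?_,
      fun i => ?_, ?_⟩
    · dsimp only
      have := hn (show i + 1 < i' + 1 by omega); have := hpos i; omega
    · simp only [shiftMap, Nat.sub_add_cancel (hpos i), hval]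
    · intro q hq
      refine hoff (q + 1) fun i h => ?_
      cases i with
      | zero => omega
      | succ i => exact hq i (by dsimp only; omega)
  · have hpos : ∀ i, 0 < n i := fun i => lt_of_lt_of_le h0 (hn.monotone i.zero_le)
    refine .inl ⟨hoff 0 fun i h => (hpos i).ne' h, fun i => n i - 1, fun i i' h => ?_,
      fun i => ?_, fun q hq => hoff (q + 1) fun i h => hq i (by dsimp only; omega)⟩
    · dsimp only
      have := hn h; have := hpos i; omega
    · simp only [shiftMap, Nat.sub_add_cancel (hpos i), hval]

lemma Xtilde_mapsTo {X : Set (ℕ → Fin 2)} (hX : MapsTo shiftMap X X) :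
    MapsTo shiftMap (Xtilde X) (Xtilde X) := by
  refine MapsTo.closure (fun x hx => ?_) continuous_shiftMap
  obtain ⟨b, hb, hxb⟩ := mem_iUnion₂.1 hx
  rcases Xb_shiftMap hxb with ⟨-, h⟩ | ⟨-, h⟩
  · exact mem_biUnion hb h
  · exact mem_biUnion (hX hb) h

lemma exists_eraseTwos_take_eq {b : ℕ → Fin 2} {x : ℕ → Fin 3} (hx : x ∈ Xb b) (W : ℕ) :
    ∃ j, eraseTwos (Stream'.take W x) = Stream'.take j b := by
  induction W generalizing x b with
  | zero => exact ⟨0, rfl⟩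
  | succ W ih =>
    change ∃ j, eraseTwos (x 0 :: Stream'.take W (shiftMap x)) = _
    rcases Xb_shiftMap hx with ⟨h0, hx'⟩ | ⟨h0, hx'⟩
    · obtain ⟨j, hj⟩ := ih hx'
      exact ⟨j, by rw [h0, eraseTwos_cons_two, hj]⟩
    · obtain ⟨j, hj⟩ := ih hx'
      refine ⟨j + 1, ?_⟩
      change eraseTwos (x 0 :: _) = b 0 :: Stream'.take j (shiftMap b)
      rw [h0, eraseTwos_cons_emb23, hj]

lemma block_append_mem_Xb {b : ℕ → Fin 2} {y z : ℕ → Fin 3} {W j t : ℕ}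
    (hz : eraseTwos (Stream'.take W z) = Stream'.take j b)
    (hy : y ∈ Xb (Stream'.drop (j + t) b)) (k : ℕ) :
    (Stream'.take W z ++ (Stream'.take t (Stream'.drop j b)).map emb23 ++
      List.replicate k 2) ++ₛ y ∈ Xb b := by
  have h := append_mem_Xb (Stream'.take W z ++ (Stream'.take t (Stream'.drop j b)).map emb23 ++
      List.replicate k 2) hy
  have hb : ∀ s : Stream' (Fin 2),
      Stream'.take j s ++ₛ (Stream'.take t (Stream'.drop j s) ++ₛ Stream'.drop (j + t) s) = s :=
    fun s => by rw [← Stream'.drop_drop, Stream'.append_take_drop, Stream'.append_take_drop]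
  rwa [eraseTwos_append, eraseTwos_append, hz, eraseTwos_map_emb23, eraseTwos_replicate_two,
    List.append_nil, Stream'.append_append_stream, hb b] at h

lemma forall_exists_mem_Xb_iterate_mem_cylinder {X : Set (ℕ → Fin 2)}
    (hX : MapsTo shiftMap X X) {u : List (Fin 2)} {z : ℕ → Fin 3} {W L : ℕ}
    (hz : eraseTwos (Stream'.take W z) = u)
    (hL : ∀ x ∈ X, ∃ t ≤ L, Stream'.take u.length (Stream'.drop t x) = u) (C : ℕ) :
    ∀ b ∈ X, Stream'.take u.length b = u →
      ∃ y ∈ Xb b, ∀ c < C, (shiftMap^[W + L + 1])^[c] y ∈ cylinder z W := by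
  have hdrop : ∀ n, ∀ x ∈ X, Stream'.drop n x ∈ X := fun n x hx =>
    shiftMap_iterate_eq_drop n x ▸ hX.iterate n hx
  induction C with
  | zero => exact fun b _ _ => ⟨_, map_emb23_mem_Xb b, fun c hc => absurd hc c.not_lt_zero⟩
  | succ C ih =>
    intro b hb hbu
    obtain ⟨t, htL, ht⟩ := hL _ (hdrop u.length b hb)
    obtain ⟨y, hy, hyC⟩ :=
      ih _ (hdrop (u.length + t) b hb) (by rwa [← Stream'.drop_drop t u.length b])
    -- the next `W + L + 1` symbols: the window of `z`, the return word from `u` to its next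
    -- occurrence, and padding
    set B := Stream'.take W z ++ (Stream'.take t (Stream'.drop u.length b)).map emb23 ++
      List.replicate (L - t + 1) 2
    have hB : B.length = W + L + 1 := by
      simp only [B, List.length_append, List.length_map, List.length_replicate,
        Stream'.length_take W z, Stream'.length_take t]
      omega
    refine ⟨B ++ₛ y, block_append_mem_Xb (hz.trans hbu.symm) hy _, ?_⟩
    rintro (_ | c) hc
    · refine mem_cylinder_iff_take_eq.2 ?_
      exact (Stream'.take_append_of_le_length W B y (by omega)).trans <| by
        simpa only [B, List.append_assoc] using List.take_left' (Stream'.length_take W z)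
    · have hBy : Stream'.drop (W + L + 1) (B ++ₛ y) = y := hB ▸ Stream'.drop_append_stream B y
      change (shiftMap^[W + L + 1])^[c] (shiftMap^[W + L + 1] (B ++ₛ y)) ∈ _
      rw [shiftMap_iterate_eq_drop _ (B ++ₛ y), hBy]
      exact hyC c (by omega)

lemma exists_mem_Xb_cylinder_subset {X : Set (ℕ → Fin 2)} {U : Set (ℕ → Fin 3)} (hU : IsOpen U)
    (hUX : (U ∩ Xtilde X).Nonempty) : ∃ b ∈ X, ∃ z ∈ Xb b, ∃ W, cylinder z W ⊆ U := by
  obtain ⟨x, hxU, hx⟩ := hUX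
  obtain ⟨z, hzU, hz⟩ := mem_closure_iff.1 hx U hU hxU
  obtain ⟨b, hb, hzb⟩ := mem_iUnion₂.1 hz
  obtain ⟨-, ⟨x₀, W, rfl⟩, hzW, hWU⟩ :=
    (isTopologicalBasis_cylinders fun _ => Fin 3).exists_subset_of_mem_open hzU hU
  exact ⟨b, hb, z, hzb, W, mem_cylinder_iff_eq.1 hzW ▸ hWU⟩

theorem exists_compact_iterate_image_eq {X : Set (ℕ → Fin 2)} (hX : IsMinimalSet shiftMap X)
    {U : Set (ℕ → Fin 3)} (hU : IsOpen U) (hUX : (U ∩ Xtilde X).Nonempty) :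
    ∃ K : Set (ℕ → Fin 3), K.Nonempty ∧ IsCompact K ∧ K ⊆ U ∩ Xtilde X ∧
      ∃ m : ℕ, 1 ≤ m ∧ shiftMap^[m] '' K = K := by
  obtain ⟨b, hb, z, hzb, W, hWU⟩ := exists_mem_Xb_cylinder_subset hU hUX
  obtain ⟨j, hj⟩ := exists_eraseTwos_take_eq hzb W
  obtain ⟨L, hL⟩ := hX.exists_bounded_return continuous_shiftMap (isOpen_cylinder _ b j)
    ⟨b, self_mem_cylinder b j, hb⟩
  have hfin := forall_exists_mem_Xb_iterate_mem_cylinder hX.2.2.1 hj (L := L)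
    (fun x hx => by
      obtain ⟨t, htL, ht⟩ := hL x hx
      refine ⟨t, htL, ?_⟩
      rwa [Stream'.length_take j b, ← shiftMap_iterate_eq_drop, ← mem_cylinder_iff_take_eq])
  set T := shiftMap^[W + L + 1]
  have hT : Continuous T := continuous_shiftMap.iterate _
  have hcyl : IsClosed (cylinder z W) :=
    cylinder_eq_pi z W ▸ isClosed_set_pi fun i _ => isClosed_singleton
  set Y := Xtilde X ∩ ⋂ c, T^[c] ⁻¹' cylinder z W
  have hYne : Y.Nonempty := by
    refine nonempty_inter_iInter_preimage_iterate hT isClosed_closure hcyl fun C => ?_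
    obtain ⟨y, hy, hyC⟩ := hfin C b hb (by rw [Stream'.length_take j b])
    exact ⟨y, subset_closure (mem_biUnion hb hy), hyC⟩
  have hYc : IsCompact Y :=
    (isClosed_closure.inter (isClosed_iInter fun c => hcyl.preimage (hT.iterate c))).isCompact
  have hTY : MapsTo T Y Y := fun y hy =>
    ⟨(Xtilde_mapsTo hX.2.2.1).iterate _ hy.1, mem_iInter.2 fun c => by
      simpa only [mem_preimage, ← iterate_succ_apply] using mem_iInter.1 hy.2 (c + 1)⟩
  obtain ⟨K, hKY, hKne, hKc, hTK⟩ := hYc.exists_subset_image_eq hT hYne hTY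
  exact ⟨K, hKne, hKc, fun x hx => ⟨hWU (mem_iInter.1 (hKY hx).2 0), (hKY hx).1⟩, _,
    Nat.le_add_left 1 _, hTK⟩

end Extension

theorem Xtilde_hyper_densePeriodic_general (X : Set (ℕ → Fin 2))
    (hXmin : IsMinimalSet shiftMap X)
    (g : (Xtilde X) → (Xtilde X)) (hg : Continuous g)
    (hgs : ∀ x : Xtilde X, (g x : ℕ → Fin 3) = shiftMap (x : ℕ → Fin 3)) :
    (∀ U : Set (ℕ → Fin 3), IsOpen U → (U ∩ Xtilde X).Nonempty →
      ∃ K : Set (ℕ → Fin 3), K.Nonempty ∧ IsCompact K ∧ K ⊆ U ∩ Xtilde X ∧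
        ∃ m : ℕ, 1 ≤ m ∧ shiftMap^[m] '' K = K) ∧
    Dense (Periodics (barMap g hg)) :=
  have h := fun U (hU : IsOpen U) => exists_compact_iterate_image_eq hXmin hU
  ⟨h, dense_periodics_barMap hg fun _ hU hne =>
    Subtype.exists_compact_iterate_image_eq hgs h hU hne⟩

/-- Every nonempty relatively open subset of the extension contains a nonempty
compact set invariant under some iterate of the shift; consequently the induced
shift map on the hyperspace of the extension has a dense set of periodic points. -/
theorem Xtilde_hyper_densePeriodic (X : Set (ℕ → Fin 2))
    (hXc : IsClosed X) (hXi : Set.MapsTo shiftMap X X)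
    (hXinf : X.Infinite) (hXmin : IsMinimalSet shiftMap X)
    (g : (Xtilde X) → (Xtilde X)) (hg : Continuous g)
    (hgs : ∀ x : Xtilde X, (g x : ℕ → Fin 3) = shiftMap (x : ℕ → Fin 3)) :
    (∀ U : Set (ℕ → Fin 3), IsOpen U → (U ∩ Xtilde X).Nonempty →
      ∃ K : Set (ℕ → Fin 3), K.Nonempty ∧ IsCompact K ∧ K ⊆ U ∩ Xtilde X ∧
        ∃ m : ℕ, 1 ≤ m ∧ shiftMap^[m] '' K = K) ∧
    Dense (Periodics (barMap g hg)) :=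
  Xtilde_hyper_densePeriodic_general X hXmin g hg hgs
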